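/- Let Ŵ and E be independent real random variables, exponentially distributed with means σ̂2² > 0 and σ_{e2}² > 0 respectively. Let P1, P2, N0, γ̄2 > 0 with λ_P := P2/P1 > γ̄2. Then P{ Ŵ·P2/(Ŵ·P1 + E·(P1+P2) + N0) < γ̄2 } = 1 − (1 + χ·(1+λ_P)·σ_{e2}²/σ̂2²)^{−1} · exp(−χ/ρ12), where χ = γ̄2/(λ_P − γ̄2) and ρ12 = P1·σ̂2²/N0. -/

import Mathlib

/-!
Because `W, E ≥ 0` and `λ_P > γ̄2`, the outage event is `{W < χ(1+λ_P)·E + χ·N0/P1}`.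
Conditionally on `E = e`, the exponential tail gives `P(W ≥ αe + β) = exp(-(αe + β)/σ̂2²)`,
and averaging over `E` is the Laplace transform of an exponential law,
`𝔼[exp(-kE)] = (1 + k·σ_{e2}²)⁻¹`.
-/

open MeasureTheory ProbabilityTheory

noncomputable def expMean (a : ℝ) : Measure ℝ :=
  volume.withDensity fun x => ENNReal.ofReal (if 0 ≤ x then (1 / a) * Real.exp (-x / a) else 0)

open Set Real ENNReal

lemma expMean_eq_expMeasure (a : ℝ) : expMean a = expMeasure a⁻¹ := by
  rw [expMean, expMeasure, gammaMeasure]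
  congr 1
  funext x
  rw [show gammaPDF 1 a⁻¹ x = exponentialPDF a⁻¹ x from rfl, exponentialPDF_eq]
  congr 2
  rw [one_div, neg_div, div_eq_inv_mul]

lemma isProbabilityMeasure_expMean {a : ℝ} (ha : 0 < a) : IsProbabilityMeasure (expMean a) := by
  rw [expMean_eq_expMeasure]
  exact isProbabilityMeasure_expMeasure (inv_pos.mpr ha)

instance (a : ℝ) : NullSingletonClass (expMean a) := by
  rw [expMean]
  infer_instance

instance (a : ℝ) : SFinite (expMean a) := by
  rw [expMean]
  infer_instance

lemma ae_nonneg_expMean (a : ℝ) : ∀ᵐ x ∂expMean a, 0 ≤ x := by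
  rw [expMean, ae_withDensity_iff
    ((Measurable.ite measurableSet_Ici (by fun_prop) measurable_const).ennreal_ofReal)]
  refine ae_of_all _ fun x hx => ?_
  by_contra h
  simp [h] at hx

lemma expMean_Ici {a x : ℝ} (ha : 0 < a) (hx : 0 ≤ x) :
    expMean a (Ici x) = ENNReal.ofReal (exp (-x / a)) := by
  have := isProbabilityMeasure_expMean ha
  have hIic : expMean a (Iic x) = ENNReal.ofReal (1 - exp (-x / a)) := by
    rw [expMean_eq_expMeasure, expMeasure, gammaMeasure, withDensity_apply _ measurableSet_Iic,
      show gammaPDF 1 a⁻¹ = exponentialPDF a⁻¹ from rfl,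
      lintegral_exponentialPDF_eq_antiDeriv (inv_pos.mpr ha) x, if_pos hx, neg_div,
      div_eq_inv_mul]
  have hexp : exp (-x / a) ≤ 1 :=
    exp_le_one_iff.mpr (div_nonpos_of_nonpos_of_nonneg (by linarith) ha.le)
  rw [← compl_Iio, prob_compl_eq_one_sub measurableSet_Iio, measure_congr Iio_ae_eq_Iic, hIic,
    ENNReal.ofReal_sub _ (exp_nonneg _), ENNReal.ofReal_one,
    ENNReal.sub_sub_cancel one_ne_top (ofReal_le_one.mpr hexp)]

lemma lintegral_exp_neg_mul_expMean {a k : ℝ} (ha : 0 < a) (hk : 0 < 1 + k * a) :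
    ∫⁻ x, ENNReal.ofReal (exp (-(k * x))) ∂expMean a = ENNReal.ofReal (1 + k * a)⁻¹ := by
  have hrate_eq : k + a⁻¹ = (1 + k * a) / a := by field_simp; ring
  have hrate : 0 < k + a⁻¹ := hrate_eq ▸ div_pos hk ha
  have hdensity : ∀ x, exponentialPDF a⁻¹ x * ENNReal.ofReal (exp (-(k * x))) =
      ENNReal.ofReal (1 + k * a)⁻¹ * exponentialPDF (k + a⁻¹) x := by
    intro x
    rcases lt_or_ge x 0 with hx | hx
    · simp [exponentialPDF_of_neg hx]
    rw [exponentialPDF_of_nonneg hx, exponentialPDF_of_nonneg hx,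
      ← ENNReal.ofReal_mul (by positivity), ← ENNReal.ofReal_mul (by positivity)]
    congr 1
    rw [mul_assoc, ← exp_add, ← mul_assoc]
    congr 1
    · rw [hrate_eq, inv_mul_eq_div, div_div_cancel_left' hk.ne']
    · congr 1; ring
  have hpdf : Measurable (exponentialPDF a⁻¹) :=
    (measurable_exponentialPDFReal a⁻¹).ennreal_ofReal
  rw [expMean_eq_expMeasure, expMeasure, gammaMeasure,
    show gammaPDF 1 a⁻¹ = exponentialPDF a⁻¹ from rfl,
    lintegral_withDensity_eq_lintegral_mul _ hpdf (by fun_prop)]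
  simp only [Pi.mul_apply, hdensity]
  rw [lintegral_const_mul' _ _ ofReal_ne_top, lintegral_exponentialPDF_eq_one hrate, mul_one]

lemma expMean_prod_setOf_affine_le {a b α β : ℝ} (ha : 0 < a) (hb : 0 < b) (hα : 0 ≤ α)
    (hβ : 0 ≤ β) :
    (expMean a).prod (expMean b) {p | α * p.2 + β ≤ p.1} =
      ENNReal.ofReal ((1 + α * b / a)⁻¹ * exp (-β / a)) := by
  have hS : MeasurableSet {p : ℝ × ℝ | α * p.2 + β ≤ p.1} :=
    measurableSet_le (by fun_prop) (by fun_prop)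
  have hslice : ∀ᵐ y ∂expMean b, expMean a ((fun x => (x, y)) ⁻¹' {p | α * p.2 + β ≤ p.1}) =
      ENNReal.ofReal (exp (-β / a)) * ENNReal.ofReal (exp (-(α / a * y))) := by
    filter_upwards [ae_nonneg_expMean b] with y hy
    have hpre : (fun x => (x, y)) ⁻¹' {p : ℝ × ℝ | α * p.2 + β ≤ p.1} = Ici (α * y + β) := rfl
    rw [hpre, expMean_Ici ha (by positivity), ← ENNReal.ofReal_mul (exp_nonneg _), ← exp_add]
    congr 2
    ring
  rw [Measure.prod_apply_symm hS, lintegral_congr_ae hslice,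
    lintegral_const_mul' _ _ ofReal_ne_top, lintegral_exp_neg_mul_expMean hb (by positivity),
    ← ENNReal.ofReal_mul (exp_nonneg _), mul_comm, div_mul_eq_mul_div]

section RandomVariables

variable {Ω : Type*} [MeasurableSpace Ω] {P : Measure Ω} {X : Ω → ℝ} {a : ℝ}

lemma aemeasurable_of_map_eq_expMean (ha : 0 < a) (hX : P.map X = expMean a) :
    AEMeasurable X P := by
  have := isProbabilityMeasure_expMean ha
  exact .of_map_ne_zero (hX ▸ IsProbabilityMeasure.ne_zero _)

lemma ae_nonneg_of_map_eq_expMean (ha : 0 < a) (hX : P.map X = expMean a) :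
    ∀ᵐ ω ∂P, 0 ≤ X ω :=
  ae_of_ae_map (aemeasurable_of_map_eq_expMean ha hX) (hX ▸ ae_nonneg_expMean a)

lemma measureReal_lt_affine_of_indepFun [IsProbabilityMeasure P] {W E : Ω → ℝ} {b α β : ℝ}
    (ha : 0 < a) (hb : 0 < b) (hα : 0 ≤ α) (hβ : 0 ≤ β) (hind : IndepFun W E P)
    (hW : P.map W = expMean a) (hE : P.map E = expMean b) :
    P.real {ω | W ω < α * E ω + β} = 1 - (1 + α * b / a)⁻¹ * exp (-β / a) := by
  have := isProbabilityMeasure_expMean ha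
  have := isProbabilityMeasure_expMean hb
  have hWm := aemeasurable_of_map_eq_expMean ha hW
  have hEm := aemeasurable_of_map_eq_expMean hb hE
  have hmap : P.map (fun ω => (W ω, E ω)) = (expMean a).prod (expMean b) :=
    hW ▸ hE ▸ (indepFun_iff_map_prod_eq_prod_map_map hWm hEm).mp hind
  set S := {p : ℝ × ℝ | α * p.2 + β ≤ p.1}
  have hS : MeasurableSet S := measurableSet_le (by fun_prop) (by fun_prop)
  have hpre : {ω | W ω < α * E ω + β} = (fun ω => (W ω, E ω)) ⁻¹' Sᶜ := by
    ext ω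
    simp [S]
  rw [hpre, measureReal_def,
    ← Measure.map_apply_of_aemeasurable (hWm.prodMk hEm) hS.compl, hmap, ← measureReal_def,
    probReal_compl_eq_one_sub hS, measureReal_def,
    expMean_prod_setOf_affine_le ha hb hα hβ, toReal_ofReal (by positivity)]

end RandomVariables

lemma sinr_lt_iff {w e P1 P2 N0 γ : ℝ} (hP1 : 0 < P1) (hγ : γ < P2 / P1)
    (hden : 0 < w * P1 + e * (P1 + P2) + N0) :
    w * P2 / (w * P1 + e * (P1 + P2) + N0) < γ ↔
      w < γ / (P2 / P1 - γ) * (1 + P2 / P1) * e + γ / (P2 / P1 - γ) * N0 / P1 := by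
  have hd : 0 < P2 - γ * P1 := by
    have := (lt_div_iff₀ hP1).mp hγ
    linarith
  have hthreshold : γ / (P2 / P1 - γ) * (1 + P2 / P1) * e + γ / (P2 / P1 - γ) * N0 / P1 =
      γ * (e * (P1 + P2) + N0) / (P2 - γ * P1) := by
    have : P2 / P1 - γ = (P2 - γ * P1) / P1 := by field_simp
    rw [this]
    field_simp
  rw [hthreshold, div_lt_iff₀ hden, lt_div_iff₀ hd]
  constructor <;> intro h <;> linarith

/-- Lemma 1, eq. (12): outage probability of the far user UE2 in
Case 1 (no relaying).  `W = |ĥ2|²` and `E = |e2|²` are independent exponentials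
with means `σh2 = σ̂2²` and `σe2 = σ_{e2}²`.  With `λ_P = P2/P1 > γ̄2`,
`χ = γ̄2/(λ_P − γ̄2)` and `ρ12 = P1·σ̂2²/N0`,
`P{W·P2/(W·P1 + E·(P1+P2) + N0) < γ̄2} = 1 − (1 + χ·(1+λ_P)·σe2/σh2)⁻¹·exp(−χ/ρ12)`. -/
theorem stmt_3 {Ω : Type*} [MeasurableSpace Ω] (P : Measure Ω) [IsProbabilityMeasure P]
    (W E : Ω → ℝ) (σh2 σe2 P1 P2 N0 γ2 : ℝ)
    (hσh2 : 0 < σh2) (hσe2 : 0 < σe2)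
    (hP1 : 0 < P1) (hP2 : 0 < P2) (hN0 : 0 < N0) (hγ2 : 0 < γ2)
    (hlam : γ2 < P2 / P1)
    (hind : IndepFun W E P)
    (hW : P.map W = expMean σh2) (hE : P.map E = expMean σe2)
    (lamP χ ρ12 : ℝ)
    (hlamP : lamP = P2 / P1) (hχ : χ = γ2 / (lamP - γ2)) (hρ12 : ρ12 = P1 * σh2 / N0) :
    (P {ω | W ω * P2 / (W ω * P1 + E ω * (P1 + P2) + N0) < γ2}).toReal =
      1 - (1 + χ * (1 + lamP) * σe2 / σh2)⁻¹ * Real.exp (-χ / ρ12) := by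
  subst hlamP hχ hρ12
  have hχ_pos : 0 < γ2 / (P2 / P1 - γ2) := div_pos hγ2 (sub_pos.mpr hlam)
  have houtage : {ω | W ω * P2 / (W ω * P1 + E ω * (P1 + P2) + N0) < γ2} =ᵐ[P]
      {ω | W ω < γ2 / (P2 / P1 - γ2) * (1 + P2 / P1) * E ω + γ2 / (P2 / P1 - γ2) * N0 / P1} := by
    filter_upwards [ae_nonneg_of_map_eq_expMean hσh2 hW, ae_nonneg_of_map_eq_expMean hσe2 hE]
      with ω hWω hEω
    exact propext (sinr_lt_iff hP1 hlam (by positivity))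
  rw [← measureReal_def, measureReal_congr houtage,
    measureReal_lt_affine_of_indepFun hσh2 hσe2 (by positivity) (by positivity) hind hW hE]
  congr 3
  field_simp
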